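/- If δ = η − g with ‖δ‖ ≤ ε, and 0 < γ with 1 − Lγ ≥ 0, then −γ⟨g, η⟩ + (Lγ²/2)‖η‖² ≤ −(γ/2)‖g‖² − ((γ − Lγ²)/2)‖η‖² + (γ/2)ε². -/

import Mathlib

theorem neg_mul_inner_add_mul_norm_sq_eq {E : Type*} [NormedAddCommGroup E]
    [InnerProductSpace ℝ E] (g η : E) (L γ : ℝ) :
    -γ * (inner ℝ g η : ℝ) + L * γ ^ 2 / 2 * ‖η‖ ^ 2 =
      -(γ / 2) * ‖g‖ ^ 2 - (γ - L * γ ^ 2) / 2 * ‖η‖ ^ 2 + γ / 2 * ‖η - g‖ ^ 2 := by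
  rw [norm_sub_sq_real, real_inner_comm]
  ring

theorem stmt_15_general {E : Type*} [NormedAddCommGroup E] [InnerProductSpace ℝ E]
    (g η δ : E) (L γ ε : ℝ)
    (hδ : δ = η - g) (hδε : ‖δ‖ ≤ ε) (hγ : 0 < γ) :
    -γ * (inner ℝ g η : ℝ) + L * γ ^ 2 / 2 * ‖η‖ ^ 2 ≤
      -(γ / 2) * ‖g‖ ^ 2 - (γ - L * γ ^ 2) / 2 * ‖η‖ ^ 2 + γ / 2 * ε ^ 2 := by
  rw [neg_mul_inner_add_mul_norm_sq_eq, ← hδ]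
  gcongr

/-- Core algebraic inequality of the descent lemma with a stale gradient `η`
approximating the true gradient `g` up to error `δ` with `‖δ‖ ≤ ε`. -/
theorem stmt_15 {E : Type*} [NormedAddCommGroup E] [InnerProductSpace ℝ E]
    (g η δ : E) (L γ ε : ℝ) (hL : 0 ≤ L) (hε : 0 ≤ ε)
    (hδ : δ = η - g) (hδε : ‖δ‖ ≤ ε) (hγ : 0 < γ) (hLγ : 1 - L * γ ≥ 0) :
    -γ * (inner ℝ g η : ℝ) + L * γ ^ 2 / 2 * ‖η‖ ^ 2 ≤
      -(γ / 2) * ‖g‖ ^ 2 - (γ - L * γ ^ 2) / 2 * ‖η‖ ^ 2 + γ / 2 * ε ^ 2 :=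
  stmt_15_general g η δ L γ ε hδ hδε hγ
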